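/- Let α ∈ (0,1), ρ' ∈ (0, (λ/γ)(1−α)/α), and let (e^{k+1})_{k≥1} be positive reals with ∑_{k≥1} e^{k+1} < ∞. Let (ũ^k, ṽ^k)_{k≥1} ⊂ ℝ^n × ℝ^m satisfy, for every k ≥ 1: ũ^{k+1} ∈ prox_{αγ‖·‖₀}((1−α)ũ^k + αDṽ^k); F(ũ^{k+1}, ṽ^{k+1}) − F(ũ^{k+1}, ṽ^k) ≤ (ρ'/2)‖ũ^{k+1} − ũ^k‖₂²; and ‖∇H(ṽ^{k+1}; ũ^{k+1})‖₂ ≤ e^{k+1}, where ∇H is the gradient of H in its first variable. Assume moreover that for any index set C ⊆ {1,…,n} such that supp(ũ^k) = C for all sufficiently large k, the operator 𝒯(u) := (1−α)T_C u + α T_C D S(Dᵀu) has at least one fixed point. Then (ũ^k, ṽ^k) converges to a pair (u*, v*) which is a local minimizer of F. -/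

import Mathlib

/-!
The `u`-step is a proximal step for `F(·, vᵏ)` and the `v`-step raises `F` by at most
`ρ'/2 ‖uᵏ⁺¹ - uᵏ‖²`; since `ρ' < (λ/γ)(1-α)/α`, `F` drops by a fixed multiple of
`‖uᵏ⁺¹ - uᵏ‖²`, and being bounded below it forces the increments to vanish. The nonzero entries of
a point of `prox_{αγ‖·‖₀}` are at least `√(2αγ)` in absolute value, so the support freezes at some
`C`. From then on `uᵏ` is an iteration of the nonexpansive operator `𝒯` with errors
`α‖vᵏ - S(Dᵀuᵏ)‖ ≤ α(2γ/λ)eᵏ`, which are summable; such an iteration is quasi-Fejér monotone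
with respect to the fixed points of `𝒯`, so it converges to one of them, `u*`, and
`vᵏ → v* = S(Dᵀu*)`. Finally `(u*, v*)` minimizes the smooth part of `F` over the vectors supported
in `C`, and leaving that support costs `λ` per new entry, so `(u*, v*)` is a local minimizer.
-/

open Matrix Filter

noncomputable section

/-- Matrix–vector multiplication as a map between Euclidean spaces. -/
def mulVecE {n m : ℕ} (A : Matrix (Fin n) (Fin m) ℝ) (v : EuclideanSpace ℝ (Fin m)) :
    EuclideanSpace ℝ (Fin n) :=
  (EuclideanSpace.equiv (Fin n) ℝ).symm (A.mulVec ((EuclideanSpace.equiv (Fin m) ℝ) v))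

/-- The `ℓ₀` "norm": the number of nonzero components, as a real number. -/
def l0 {n : ℕ} (u : EuclideanSpace ℝ (Fin n)) : ℝ := ({i : Fin n | u i ≠ 0}).ncard

/-- The support of a vector. -/
def supp {n : ℕ} (u : EuclideanSpace ℝ (Fin n)) : Set (Fin n) := {i | u i ≠ 0}

/-- Membership `x ∈ prox_{t‖·‖₀}(y)`. -/
def InProxL0 {n : ℕ} (t : ℝ) (x y : EuclideanSpace ℝ (Fin n)) : Prop :=
  ∀ z : EuclideanSpace ℝ (Fin n),
    (1 / (2 * t)) * ‖x - y‖ ^ 2 + l0 x ≤ (1 / (2 * t)) * ‖z - y‖ ^ 2 + l0 z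

/-- The objective `F(u,v) = ψ(Bv) + (λ/(2γ))‖u − Dv‖₂² + λ‖u‖₀`. -/
def Fobj {n m p : ℕ} (ψ : EuclideanSpace ℝ (Fin p) → ℝ) (B : Matrix (Fin p) (Fin m) ℝ)
    (D : Matrix (Fin n) (Fin m) ℝ) (lam γ : ℝ) (u : EuclideanSpace ℝ (Fin n))
    (v : EuclideanSpace ℝ (Fin m)) : ℝ :=
  ψ (mulVecE B v) + (lam / (2 * γ)) * ‖u - mulVecE D v‖ ^ 2 + lam * l0 u

/-- `H(v; u) = (λ/(2γ))‖v − Dᵀu‖₂² + ψ(Bv)`. -/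
def Hfun {n m p : ℕ} (ψ : EuclideanSpace ℝ (Fin p) → ℝ) (B : Matrix (Fin p) (Fin m) ℝ)
    (D : Matrix (Fin n) (Fin m) ℝ) (lam γ : ℝ) (v : EuclideanSpace ℝ (Fin m))
    (u : EuclideanSpace ℝ (Fin n)) : ℝ :=
  (lam / (2 * γ)) * ‖v - mulVecE Dᵀ u‖ ^ 2 + ψ (mulVecE B v)

/-- The coordinate projection `T_C` onto an index set `C`. -/
def Tmat {n : ℕ} (C : Set (Fin n)) (u : EuclideanSpace ℝ (Fin n)) :
    EuclideanSpace ℝ (Fin n) :=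
  (EuclideanSpace.equiv (Fin n) ℝ).symm (C.indicator (fun i => u i))

open Topology

section Matrix

variable {n m : ℕ}

lemma mulVecE_eq_toEuclideanLin (A : Matrix (Fin n) (Fin m) ℝ) :
    mulVecE A = Matrix.toEuclideanLin A := rfl

lemma mulVecE_add (A : Matrix (Fin n) (Fin m) ℝ) (x y : EuclideanSpace ℝ (Fin m)) :
    mulVecE A (x + y) = mulVecE A x + mulVecE A y :=
  map_add (Matrix.toEuclideanLin A) x y

lemma mulVecE_sub (A : Matrix (Fin n) (Fin m) ℝ) (x y : EuclideanSpace ℝ (Fin m)) :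
    mulVecE A (x - y) = mulVecE A x - mulVecE A y :=
  map_sub (Matrix.toEuclideanLin A) x y

lemma mulVecE_smul (A : Matrix (Fin n) (Fin m) ℝ) (c : ℝ) (x : EuclideanSpace ℝ (Fin m)) :
    mulVecE A (c • x) = c • mulVecE A x :=
  map_smul (Matrix.toEuclideanLin A) c x

@[fun_prop]
lemma continuous_mulVecE (A : Matrix (Fin n) (Fin m) ℝ) : Continuous (mulVecE A) :=
  (Matrix.toEuclideanLin A).continuous_of_finiteDimensional

lemma inner_mulVecE_left (A : Matrix (Fin n) (Fin m) ℝ) (x : EuclideanSpace ℝ (Fin m))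
    (y : EuclideanSpace ℝ (Fin n)) :
    inner ℝ (mulVecE A x) y = inner ℝ x (mulVecE Aᵀ y) := by
  rw [mulVecE_eq_toEuclideanLin, mulVecE_eq_toEuclideanLin, ← conjTranspose_eq_transpose_of_trivial,
    Matrix.toEuclideanLin_conjTranspose_eq_adjoint, LinearMap.adjoint_inner_right]

variable {D : Matrix (Fin n) (Fin m) ℝ}

lemma norm_mulVecE_of_transpose_mul_self (hD : Dᵀ * D = 1) (v : EuclideanSpace ℝ (Fin m)) :
    ‖mulVecE D v‖ = ‖v‖ := by
  have hDtD : mulVecE Dᵀ (mulVecE D v) = v := by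
    rw [mulVecE_eq_toEuclideanLin, mulVecE_eq_toEuclideanLin, ← LinearMap.comp_apply,
      ← Matrix.toLpLin_mul_same, hD, Matrix.toLpLin_one, LinearMap.id_apply]
  rw [← sq_eq_sq₀ (norm_nonneg _) (norm_nonneg _), ← real_inner_self_eq_norm_sq,
    ← real_inner_self_eq_norm_sq, inner_mulVecE_left, hDtD]

lemma norm_mulVecE_transpose_le (hD : Dᵀ * D = 1) (x : EuclideanSpace ℝ (Fin n)) :
    ‖mulVecE Dᵀ x‖ ≤ ‖x‖ := by
  have h := real_inner_le_norm (mulVecE D (mulVecE Dᵀ x)) x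
  rw [inner_mulVecE_left, real_inner_self_eq_norm_sq, norm_mulVecE_of_transpose_mul_self hD,
    sq] at h
  nlinarith [norm_nonneg (mulVecE Dᵀ x), norm_nonneg x]

lemma norm_mulVecE_sub_sq (hD : Dᵀ * D = 1) (w : EuclideanSpace ℝ (Fin m))
    (x : EuclideanSpace ℝ (Fin n)) :
    ‖mulVecE D w - x‖ ^ 2 = ‖w - mulVecE Dᵀ x‖ ^ 2 + (‖x‖ ^ 2 - ‖mulVecE Dᵀ x‖ ^ 2) := by
  rw [norm_sub_sq_real, norm_sub_sq_real, norm_mulVecE_of_transpose_mul_self hD,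
    inner_mulVecE_left]
  ring

end Matrix

section CoordinateProjection

variable {n : ℕ}

lemma l0_eq_ncard_supp (u : EuclideanSpace ℝ (Fin n)) : l0 u = (supp u).ncard := rfl

lemma mem_supp {u : EuclideanSpace ℝ (Fin n)} {i : Fin n} : i ∈ supp u ↔ u i ≠ 0 := Iff.rfl

open scoped Classical in
lemma Tmat_apply (C : Set (Fin n)) (u : EuclideanSpace ℝ (Fin n)) (i : Fin n) :
    Tmat C u i = if i ∈ C then u i else 0 :=
  Set.indicator_apply C (fun i => u i) i

lemma Tmat_add (C : Set (Fin n)) (x y : EuclideanSpace ℝ (Fin n)) :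
    Tmat C (x + y) = Tmat C x + Tmat C y := by
  ext i; simp only [Tmat_apply, PiLp.add_apply]; split_ifs <;> simp

lemma Tmat_sub (C : Set (Fin n)) (x y : EuclideanSpace ℝ (Fin n)) :
    Tmat C (x - y) = Tmat C x - Tmat C y := by
  ext i; simp only [Tmat_apply, PiLp.sub_apply]; split_ifs <;> simp

lemma Tmat_smul (C : Set (Fin n)) (c : ℝ) (x : EuclideanSpace ℝ (Fin n)) :
    Tmat C (c • x) = c • Tmat C x := by
  ext i; simp only [Tmat_apply, PiLp.smul_apply, smul_eq_mul]; split_ifs <;> simp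

lemma Tmat_eq_self {C : Set (Fin n)} {u : EuclideanSpace ℝ (Fin n)} (h : supp u ⊆ C) :
    Tmat C u = u := by
  ext i
  rw [Tmat_apply]
  split_ifs with hi
  · rfl
  · exact (not_not.1 fun hu => hi (h hu)).symm

lemma norm_sub_sq_eq_of_Tmat_eq {C : Set (Fin n)} {u : EuclideanSpace ℝ (Fin n)}
    (hu : Tmat C u = u) (x : EuclideanSpace ℝ (Fin n)) :
    ‖x - u‖ ^ 2 = ‖Tmat C x - u‖ ^ 2 + ‖x - Tmat C x‖ ^ 2 := by
  simp only [EuclideanSpace.real_norm_sq_eq, ← Finset.sum_add_distrib]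
  refine Finset.sum_congr rfl fun i _ => ?_
  have hui := congrArg (· i) hu
  simp only [Tmat_apply] at hui
  simp only [PiLp.sub_apply, Tmat_apply]
  split_ifs at hui ⊢ <;> simp [← hui]

lemma norm_Tmat_le (C : Set (Fin n)) (x : EuclideanSpace ℝ (Fin n)) : ‖Tmat C x‖ ≤ ‖x‖ := by
  have h : ‖x‖ ^ 2 = ‖Tmat C x‖ ^ 2 + ‖x - Tmat C x‖ ^ 2 := by
    simpa using norm_sub_sq_eq_of_Tmat_eq (u := 0) (by simpa using Tmat_smul C 0 0) x
  exact (sq_le_sq₀ (norm_nonneg _) (norm_nonneg _)).1 (h ▸ le_add_of_nonneg_right (sq_nonneg _))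

end CoordinateProjection

section HardThresholding

variable {n : ℕ}

lemma norm_add_single_sub_sq (x y : EuclideanSpace ℝ (Fin n)) (i : Fin n) (d : ℝ) :
    ‖x + EuclideanSpace.single i d - y‖ ^ 2 = ‖x - y‖ ^ 2 + 2 * d * (x i - y i) + d ^ 2 := by
  rw [add_sub_right_comm, norm_add_sq_real, EuclideanSpace.inner_single_right,
    PiLp.norm_single]
  simp only [PiLp.sub_apply, conj_trivial, Real.norm_eq_abs, sq_abs]
  ring

lemma add_single_apply (x : EuclideanSpace ℝ (Fin n)) (i j : Fin n) (d : ℝ) :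
    (x + EuclideanSpace.single i d) j = if j = i then x i + d else x j := by
  by_cases hj : j = i <;> simp [hj]

lemma supp_add_single_of_ne_zero {x : EuclideanSpace ℝ (Fin n)} {i : Fin n} {d : ℝ}
    (hx : x i ≠ 0) (hd : x i + d ≠ 0) : supp (x + EuclideanSpace.single i d) = supp x := by
  ext j
  simp only [mem_supp, add_single_apply]
  split_ifs with hj
  · subst hj; exact iff_of_true hd hx
  · rfl

lemma supp_add_single_neg (x : EuclideanSpace ℝ (Fin n)) (i : Fin n) :
    supp (x + EuclideanSpace.single i (-x i)) = supp x \ {i} := by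
  ext j
  simp only [mem_supp, add_single_apply, Set.mem_sdiff, Set.mem_singleton_iff]
  split_ifs with hj <;> simp [hj]

lemma InProxL0.apply_eq_and_le_sq {t : ℝ} (ht : 0 < t) {x y : EuclideanSpace ℝ (Fin n)}
    (h : InProxL0 t x y) {i : Fin n} (hi : x i ≠ 0) : x i = y i ∧ 2 * t ≤ y i ^ 2 := by
  have ha : 0 < 1 / (2 * t) := by positivity
  have hzero := h (x + EuclideanSpace.single i (-x i))
  rw [norm_add_single_sub_sq, l0_eq_ncard_supp, l0_eq_ncard_supp, supp_add_single_neg,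
    Set.ncard_sdiff_singleton_of_mem hi, Nat.cast_pred ((Set.ncard_pos).2 ⟨i, hi⟩)] at hzero
  have hyi : y i ≠ 0 := by
    intro hy
    rw [hy] at hzero
    nlinarith [sq_nonneg (x i)]
  have hcopy := h (x + EuclideanSpace.single i (y i - x i))
  rw [norm_add_single_sub_sq, l0_eq_ncard_supp, l0_eq_ncard_supp,
    supp_add_single_of_ne_zero hi (by rwa [add_sub_cancel])] at hcopy
  have hsq : 1 / (2 * t) * (x i - y i) ^ 2 = 0 := by
    nlinarith [mul_nonneg ha.le (sq_nonneg (x i - y i))]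
  have hxy : x i = y i := sub_eq_zero.1 (by simpa [ht.ne'] using hsq)
  refine ⟨hxy, ?_⟩
  rw [hxy] at hzero
  have : 1 ≤ 1 / (2 * t) * y i ^ 2 := by nlinarith
  rwa [div_mul_eq_mul_div, one_mul, le_div_iff₀ (by positivity), one_mul] at this

lemma InProxL0.eq_Tmat_supp {t : ℝ} (ht : 0 < t) {x y : EuclideanSpace ℝ (Fin n)}
    (h : InProxL0 t x y) : x = Tmat (supp x) y := by
  ext i
  rw [Tmat_apply]
  split_ifs with hi
  · exact (h.apply_eq_and_le_sq ht hi).1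
  · exact not_not.1 hi

lemma InProxL0.sqrt_le_abs {t : ℝ} (ht : 0 < t) {x y : EuclideanSpace ℝ (Fin n)}
    (h : InProxL0 t x y) {i : Fin n} (hi : x i ≠ 0) : √(2 * t) ≤ |x i| := by
  obtain ⟨hxy, hle⟩ := h.apply_eq_and_le_sq ht hi
  rw [hxy, ← Real.sqrt_sq_eq_abs]
  exact Real.sqrt_le_sqrt hle

end HardThresholding

section SupportStabilization

variable {n : ℕ}

lemma abs_apply_le_norm (x : EuclideanSpace ℝ (Fin n)) (i : Fin n) : |x i| ≤ ‖x‖ :=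
  (Real.norm_eq_abs _).symm.trans_le (PiLp.norm_apply_le x i)

lemma supp_subset_of_norm_sub_lt {x y : EuclideanSpace ℝ (Fin n)} {τ : ℝ}
    (hx : ∀ i, x i ≠ 0 → τ ≤ |x i|) (hxy : ‖x - y‖ < τ) : supp x ⊆ supp y := by
  intro i hi hyi
  have := abs_apply_le_norm (x - y) i
  rw [PiLp.sub_apply, hyi, sub_zero] at this
  linarith [hx i hi]

lemma exists_eventually_supp_eq {u : ℕ → EuclideanSpace ℝ (Fin n)} {τ : ℝ} (hτ : 0 < τ)
    (hth : ∀ᶠ k in atTop, ∀ i, u k i ≠ 0 → τ ≤ |u k i|)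
    (hreg : Tendsto (fun k => ‖u (k + 1) - u k‖) atTop (𝓝 0)) :
    ∃ N, ∀ k, N ≤ k → supp (u k) = supp (u N) := by
  rw [← eventuallyConst_atTop, eventuallyConst_atTop_nat]
  refine eventually_atTop.1 ?_
  filter_upwards [hth, (tendsto_add_atTop_nat 1).eventually hth, hreg.eventually (gt_mem_nhds hτ)]
    with k hk hk₁ hlt
  exact (supp_subset_of_norm_sub_lt hk₁ hlt).antisymm
    (supp_subset_of_norm_sub_lt hk (norm_sub_rev (u (k + 1)) (u k) ▸ hlt))

lemma supp_eq_of_tendsto {u : ℕ → EuclideanSpace ℝ (Fin n)} {a : EuclideanSpace ℝ (Fin n)}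
    (hu : Tendsto u atTop (𝓝 a)) {τ : ℝ} (hτ : 0 < τ)
    (hth : ∀ᶠ k in atTop, ∀ i, u k i ≠ 0 → τ ≤ |u k i|) {C : Set (Fin n)}
    (hC : ∀ᶠ k in atTop, supp (u k) = C) : supp a = C := by
  ext i
  have hi : Tendsto (fun k => u k i) atTop (𝓝 (a i)) :=
    ((PiLp.continuous_apply 2 _ i).tendsto a).comp hu
  by_cases hiC : i ∈ C
  · have hle : τ ≤ |a i| := ge_of_tendsto (continuous_abs.tendsto _ |>.comp hi) <| by
      filter_upwards [hth, hC] with k hk hkC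
      exact hk i (mem_supp.1 (hkC ▸ hiC))
    exact iff_of_true (abs_pos.1 (hτ.trans_le hle)) hiC
  · have hzero : (fun k => u k i) =ᶠ[atTop] fun _ => 0 := by
      filter_upwards [hC] with k hkC
      exact not_not.1 fun h => hiC (hkC ▸ h)
    exact iff_of_false (not_not.2 (tendsto_nhds_unique hi (tendsto_const_nhds.congr' hzero.symm)))
      hiC

end SupportStabilization

section ConvexAnalysis

variable {E : Type*} [NormedAddCommGroup E] [InnerProductSpace ℝ E]

lemma le_of_forall_mem_Ioo_le_add_mul {a b K : ℝ} (h : ∀ t ∈ Set.Ioo (0 : ℝ) 1, a ≤ b + t * K) :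
    a ≤ b := by
  have hlim : Tendsto (fun t : ℝ => b + t * K) (𝓝[>] 0) (𝓝 b) :=
    ((continuous_const.add (continuous_id.mul continuous_const)).tendsto' 0 b (by simp)).mono_left
      nhdsWithin_le_nhds
  exact ge_of_tendsto hlim (eventually_of_mem (Ioo_mem_nhdsGT one_pos) h)

lemma norm_add_smul_sub_sq (a b : E) (t : ℝ) :
    ‖a + t • (b - a)‖ ^ 2 = (1 - t) * ‖a‖ ^ 2 + t * ‖b‖ ^ 2 - t * (1 - t) * ‖b - a‖ ^ 2 := by
  have hb : ‖b‖ ^ 2 = ‖a + (b - a)‖ ^ 2 := by rw [add_sub_cancel]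
  rw [hb, norm_add_sq_real, norm_add_sq_real, inner_smul_right, norm_smul, mul_pow,
    Real.norm_eq_abs, sq_abs]
  ring

lemma convexOn_univ_norm_sub_sq (x : E) : ConvexOn ℝ Set.univ fun w : E => ‖w - x‖ ^ 2 := by
  simpa [Function.comp_def, ← sub_eq_neg_add] using
    ((convexOn_univ_norm.pow fun _ _ => norm_nonneg _) 2).translate_right (-x)

lemma ConvexOn.add_norm_sub_sq_le {f : E → ℝ} (hf : ConvexOn ℝ Set.univ f) {c : ℝ} {x s : E}
    (hs : ∀ w, f s + c * ‖s - x‖ ^ 2 ≤ f w + c * ‖w - x‖ ^ 2) (w : E) :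
    f s + c * ‖s - x‖ ^ 2 + c * ‖w - s‖ ^ 2 ≤ f w + c * ‖w - x‖ ^ 2 := by
  refine le_of_forall_mem_Ioo_le_add_mul (K := c * ‖w - s‖ ^ 2) fun t ⟨ht₀, ht₁⟩ => ?_
  have hmin := hs (s + t • (w - s))
  have hconv : f (s + t • (w - s)) ≤ (1 - t) * f s + t * f w := by
    have := hf.2 (Set.mem_univ s) (Set.mem_univ w) (sub_nonneg.2 ht₁.le) ht₀.le (sub_add_cancel 1 t)
    rwa [show (1 - t) • s + t • w = s + t • (w - s) by module, smul_eq_mul, smul_eq_mul] at this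
  have hnorm := norm_add_smul_sub_sq (s - x) (w - x) t
  rw [show s - x + t • (w - x - (s - x)) = s + t • (w - s) - x by module,
    show w - x - (s - x) = w - s by abel] at hnorm
  rw [hnorm] at hmin
  have : t * (f s + c * ‖s - x‖ ^ 2 + c * ‖w - s‖ ^ 2) ≤
      t * (f w + c * ‖w - x‖ ^ 2 + t * (c * ‖w - s‖ ^ 2)) := by nlinarith
  exact le_of_mul_le_mul_left this ht₀

lemma lipschitzWith_one_of_isMin_add_norm_sub_sq {f : E → ℝ} (hf : ConvexOn ℝ Set.univ f)
    {c : ℝ} (hc : 0 < c) {S : E → E}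
    (hS : ∀ x w, f (S x) + c * ‖S x - x‖ ^ 2 ≤ f w + c * ‖w - x‖ ^ 2) : LipschitzWith 1 S := by
  refine LipschitzWith.of_dist_le_mul fun x y => ?_
  rw [NNReal.coe_one, one_mul, dist_eq_norm, dist_eq_norm]
  have hx := hf.add_norm_sub_sq_le (hS x) (S y)
  have hy := hf.add_norm_sub_sq_le (hS y) (S x)
  have hfour : ‖S y - x‖ ^ 2 + ‖S x - y‖ ^ 2 - ‖S x - x‖ ^ 2 - ‖S y - y‖ ^ 2 =
      2 * inner ℝ (S x - S y) (x - y) := by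
    simp only [norm_sub_sq_real, inner_sub_left, inner_sub_right, real_inner_comm]
    ring
  have hcs := real_inner_le_norm (S x - S y) (x - y)
  rw [norm_sub_rev (S y) (S x)] at hx
  have : c * ‖S x - S y‖ ^ 2 ≤ c * (‖S x - S y‖ * ‖x - y‖) := by nlinarith
  have := le_of_mul_le_mul_left this hc
  nlinarith [norm_nonneg (S x - S y), norm_nonneg (x - y)]

lemma ConvexOn.inner_gradient_le_sub [CompleteSpace E] {f : E → ℝ} (hf : ConvexOn ℝ Set.univ f)
    {x : E} (hd : DifferentiableAt ℝ f x) (y : E) :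
    inner ℝ (gradient f x) (y - x) ≤ f y - f x := by
  have hline :
      HasDerivAt (f ∘ AffineMap.lineMap (k := ℝ) x y) (inner ℝ (gradient f x) (y - x)) 0 := by
    have hf' : HasFDerivAt f (InnerProductSpace.toDual ℝ E (gradient f x))
        (AffineMap.lineMap (k := ℝ) x y (0 : ℝ)) := by
      simpa using hd.hasGradientAt.hasFDerivAt
    simpa using hf'.comp_hasDerivAt (0 : ℝ) AffineMap.hasDerivAt_lineMap
  have hconv : ConvexOn ℝ Set.univ (f ∘ AffineMap.lineMap (k := ℝ) x y) := by
    simpa using hf.comp_affineMap (AffineMap.lineMap (k := ℝ) x y)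
  simpa [slope_def_field] using
    hconv.le_slope_of_hasDerivAt (Set.mem_univ 0) (Set.mem_univ 1) one_pos hline

lemma ConvexOn.mul_norm_sub_le_norm_gradient [CompleteSpace E] {f : E → ℝ}
    (hf : ConvexOn ℝ Set.univ f) (hfd : Differentiable ℝ f) {c : ℝ} (hc : 0 < c) {x s : E}
    (hs : ∀ w, f s + c * ‖s - x‖ ^ 2 ≤ f w + c * ‖w - x‖ ^ 2) (v : E) :
    c * ‖v - s‖ ≤ ‖gradient (fun w => c * ‖w - x‖ ^ 2 + f w) v‖ := by
  set H := fun w => c * ‖w - x‖ ^ 2 + f w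
  have hH : ConvexOn ℝ Set.univ H := ((convexOn_univ_norm_sub_sq x).smul hc.le).add hf
  have hHd : DifferentiableAt ℝ H v :=
    ((((contDiff_norm_sq ℝ).differentiable one_ne_zero).comp
      (differentiable_id.sub_const x)).const_mul c).add hfd v
  have hgrad := hH.inner_gradient_le_sub hHd s
  have hgap : H s + c * ‖v - s‖ ^ 2 ≤ H v := by
    have := hf.add_norm_sub_sq_le hs v
    simp only [H]
    linarith
  have hcs := real_inner_le_norm (gradient H v) (v - s)
  rw [← neg_sub v s, inner_neg_right] at hgrad
  nlinarith [norm_nonneg (v - s), norm_nonneg (gradient H v)]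

lemma ConvexOn.le_of_isMin_of_le_add_sq {F : Type*} [AddCommGroup F] [Module ℝ F] {f g : F → ℝ}
    (hf : ConvexOn ℝ Set.univ f) {x₀ : F} (hg : ∀ w, g x₀ ≤ g w) (hfg : g x₀ = f x₀)
    (hgap : ∀ w, ∃ K, ∀ t : ℝ, 0 < t → g (x₀ + t • (w - x₀)) ≤ f (x₀ + t • (w - x₀)) + t ^ 2 * K)
    (w : F) : f x₀ ≤ f w := by
  obtain ⟨K, hK⟩ := hgap w
  refine le_of_forall_mem_Ioo_le_add_mul (K := K) fun t ⟨ht₀, ht₁⟩ => ?_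
  have hconv := hf.2 (Set.mem_univ x₀) (Set.mem_univ w) (sub_nonneg.2 ht₁.le) ht₀.le
    (sub_add_cancel 1 t)
  rw [show (1 - t) • x₀ + t • w = x₀ + t • (w - x₀) by module, smul_eq_mul, smul_eq_mul] at hconv
  have : t * f x₀ ≤ t * (f w + t * K) := by nlinarith [hg (x₀ + t • (w - x₀)), hK t ht₀]
  exact le_of_mul_le_mul_left this ht₀

end ConvexAnalysis

section Sequences

lemma eventually_atTop_of_succ {P : ℕ → Prop} {N : ℕ} (h : ∀ k, N ≤ k → P (k + 1)) :
    ∀ᶠ k in atTop, P k :=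
  map_add_atTop_eq_nat 1 ▸ eventually_atTop.2 ⟨N, h⟩

lemma tendsto_zero_of_add_mul_sq_le {a d : ℕ → ℝ} {c : ℝ} (hc : 0 < c)
    (ha : BddBelow (Set.range a)) (h : ∀ᶠ k in atTop, a (k + 1) + c * d k ^ 2 ≤ a k) :
    Tendsto d atTop (𝓝 0) := by
  obtain ⟨N, hN⟩ := eventually_atTop.1 h
  have hdec (j : ℕ) : c * d (j + N) ^ 2 ≤ a (j + N) - a (j + 1 + N) := by
    have := hN (j + N) (Nat.le_add_left N j)
    rw [add_right_comm]
    linarith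
  have hanti : Antitone fun j => a (j + N) := antitone_nat_of_succ_le fun j => by
    nlinarith [hdec j, sq_nonneg (d (j + N))]
  have hconv := tendsto_atTop_ciInf hanti (ha.mono (Set.range_comp_subset_range _ a))
  have hgap : Tendsto (fun j => (a (j + N) - a (j + 1 + N)) / c) atTop (𝓝 0) := by
    simpa using (hconv.sub (hconv.comp (tendsto_add_atTop_nat 1))).div_const c
  have hsq : Tendsto (fun j => d (j + N) ^ 2) atTop (𝓝 0) :=
    squeeze_zero (fun j => sq_nonneg _) (fun j => (le_div_iff₀' hc).2 (hdec j)) hgap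
  rw [← tendsto_add_atTop_iff_nat N, tendsto_zero_iff_abs_tendsto_zero]
  simpa [Function.comp_def, Real.sqrt_sq_eq_abs] using hsq.sqrt

end Sequences

section InexactIteration

variable {E : Type*} [NormedAddCommGroup E]

lemma antitone_norm_sub_add_tsum {T : E → E} (hT : LipschitzWith 1 T) {z : E} (hz : T z = z)
    {u : ℕ → E} {δ : ℕ → ℝ} (hδ : Summable δ) (hstep : ∀ k, ‖u (k + 1) - T (u k)‖ ≤ δ k) :
    Antitone fun k => ‖u k - z‖ + ∑' i, δ (i + k) := by
  refine antitone_nat_of_succ_le fun k => ?_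
  have htail : ∑' i, δ (i + k) = δ k + ∑' i, δ (i + (k + 1)) := by
    rw [((summable_nat_add_iff k).2 hδ).tsum_eq_zero_add, zero_add]
    simp only [add_right_comm _ 1 k, add_assoc]
  have hnonexp : ‖T (u k) - z‖ ≤ ‖u k - z‖ := by
    simpa [hz] using hT.norm_sub_le (u k) z
  have := norm_sub_le_norm_sub_add_norm_sub (u (k + 1)) (T (u k)) z
  linarith [hstep k]

theorem exists_tendsto_fixedPoint_of_inexact [ProperSpace E] {T : E → E} (hT : LipschitzWith 1 T)
    {w : E} (hw : T w = w) {u : ℕ → E} {δ : ℕ → ℝ} (hδ : Summable δ)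
    (hstep : ∀ k, ‖u (k + 1) - T (u k)‖ ≤ δ k)
    (hreg : Tendsto (fun k => ‖u (k + 1) - u k‖) atTop (𝓝 0)) :
    ∃ a, T a = a ∧ Tendsto u atTop (𝓝 a) := by
  have htail_nonneg (k : ℕ) : 0 ≤ ∑' i, δ (i + k) :=
    tsum_nonneg fun i => (norm_nonneg _).trans (hstep _)
  have hbdd (k : ℕ) : u k ∈ Metric.closedBall w (‖u 0 - w‖ + ∑' i, δ (i + 0)) := by
    rw [Metric.mem_closedBall, dist_eq_norm]
    exact (le_add_of_nonneg_right (htail_nonneg k)).trans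
      (antitone_norm_sub_add_tsum hT hw hδ hstep (Nat.zero_le k))
  obtain ⟨a, -, φ, hφ, hua⟩ := tendsto_subseq_of_bounded Metric.isBounded_closedBall hbdd
  have hresidual : Tendsto (fun k => T (u k) - u k) atTop (𝓝 0) := by
    have herr : Tendsto (fun k => u (k + 1) - T (u k)) atTop (𝓝 0) :=
      squeeze_zero_norm hstep hδ.tendsto_atTop_zero
    simpa using (tendsto_zero_iff_norm_tendsto_zero.2 hreg).sub herr
  have hfix : T a = a := sub_eq_zero.1 <| tendsto_nhds_unique
    (((hT.continuous.tendsto a).comp hua).sub hua) (hresidual.comp hφ.tendsto_atTop)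
  refine ⟨a, hfix, ?_⟩
  set r := fun k => ‖u k - a‖ + ∑' i, δ (i + k)
  have hr := tendsto_atTop_ciInf (antitone_norm_sub_add_tsum hT hfix hδ hstep)
    ⟨0, by rintro _ ⟨k, rfl⟩; exact add_nonneg (norm_nonneg _) (htail_nonneg k)⟩
  have hrφ : Tendsto (r ∘ φ) atTop (𝓝 0) := by
    have := (tendsto_iff_norm_sub_tendsto_zero.1 hua).add
      ((tendsto_sum_nat_add δ).comp hφ.tendsto_atTop)
    rwa [add_zero] at this
  rw [tendsto_nhds_unique (hr.comp hφ.tendsto_atTop) hrφ] at hr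
  exact tendsto_iff_norm_sub_tendsto_zero.2 <|
    squeeze_zero (fun k => norm_nonneg _) (fun k => le_add_of_nonneg_right (htail_nonneg k)) hr

theorem exists_tendsto_fixedPoint_of_eventually_inexact [ProperSpace E] {T : E → E}
    (hT : LipschitzWith 1 T) {w : E} (hw : T w = w) {u : ℕ → E} {δ : ℕ → ℝ} (hδ : Summable δ)
    (hstep : ∀ᶠ k in atTop, ‖u (k + 1) - T (u k)‖ ≤ δ k)
    (hreg : Tendsto (fun k => ‖u (k + 1) - u k‖) atTop (𝓝 0)) :
    ∃ a, T a = a ∧ Tendsto u atTop (𝓝 a) := by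
  obtain ⟨N, hN⟩ := eventually_atTop.1 hstep
  obtain ⟨a, ha, hu⟩ := exists_tendsto_fixedPoint_of_inexact hT hw
    ((summable_nat_add_iff N).2 hδ) (u := fun k => u (k + N))
    (fun k => by simpa only [add_right_comm k 1 N] using hN (k + N) (Nat.le_add_left N k))
    (by simpa only [Function.comp_def, add_right_comm _ 1 N] using
      hreg.comp (tendsto_add_atTop_nat N))
  exact ⟨a, ha, (tendsto_add_atTop_iff_nat N).1 hu⟩

end InexactIteration

section LocalMin

variable {n : ℕ}

/-- Near `q₀` the support can only grow, and each new entry costs `λ`. -/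
lemma isLocalMin_add_mul_l0 {Y : Type*} [TopologicalSpace Y]
    {G : EuclideanSpace ℝ (Fin n) × Y → ℝ} {q₀ : EuclideanSpace ℝ (Fin n) × Y}
    (hG : ContinuousAt G q₀) {lam : ℝ} (hlam : 0 < lam)
    (hmin : ∀ q : EuclideanSpace ℝ (Fin n) × Y, supp q.1 ⊆ supp q₀.1 → G q₀ ≤ G q) :
    IsLocalMin (fun q => G q + lam * l0 q.1) q₀ := by
  have hnear : ∀ᶠ q in 𝓝 q₀, G q₀ - lam < G q := hG.eventually (lt_mem_nhds (by linarith))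
  have hsupp : ∀ᶠ q in 𝓝 q₀, supp q₀.1 ⊆ supp q.1 := by
    have hcoord (i : Fin n) : ∀ᶠ q in 𝓝 q₀, q₀.1 i ≠ 0 → q.1 i ≠ 0 := by
      by_cases hi : q₀.1 i = 0
      · exact Eventually.of_forall fun _ h => absurd hi h
      · exact (((PiLp.continuous_apply 2 _ i).comp continuous_fst).continuousAt.eventually_ne
          hi).mono fun _ h _ => h
    filter_upwards [eventually_all.2 hcoord] with q hq i hi using hq i hi
  filter_upwards [hnear, hsupp] with q hGq hq
  simp only [l0_eq_ncard_supp]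
  rcases hq.eq_or_ssubset with heq | hlt
  · rw [← heq]
    linarith [hmin q heq.ge]
  · have hcard : ((supp q₀.1).ncard : ℝ) + 1 ≤ (supp q.1).ncard := by
      exact_mod_cast Set.ncard_lt_ncard hlt (Set.toFinite _)
    nlinarith

end LocalMin

section Problem

variable {n m p : ℕ} {ψ : EuclideanSpace ℝ (Fin p) → ℝ} {B : Matrix (Fin p) (Fin m) ℝ}
  {D : Matrix (Fin n) (Fin m) ℝ} {lam γ α : ℝ}
  {S : EuclideanSpace ℝ (Fin m) → EuclideanSpace ℝ (Fin m)}

lemma convexOn_comp_mulVecE (hψ : ConvexOn ℝ Set.univ ψ) (B : Matrix (Fin p) (Fin m) ℝ) :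
    ConvexOn ℝ Set.univ fun v => ψ (mulVecE B v) :=
  hψ.comp_linearMap (Matrix.toEuclideanLin B)

lemma differentiable_comp_mulVecE (hψ : Differentiable ℝ ψ) (B : Matrix (Fin p) (Fin m) ℝ) :
    Differentiable ℝ fun v => ψ (mulVecE B v) :=
  hψ.comp (LinearMap.toContinuousLinearMap (Matrix.toEuclideanLin B)).differentiable

lemma le_Fobj {L : ℝ} (hL : ∀ y, L ≤ ψ y) (hlam : 0 ≤ lam) (hγ : 0 ≤ γ)
    (u : EuclideanSpace ℝ (Fin n)) (v : EuclideanSpace ℝ (Fin m)) :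
    L ≤ Fobj ψ B D lam γ u v := by
  have hl0 : 0 ≤ l0 u := Nat.cast_nonneg _
  have : 0 ≤ lam / (2 * γ) * ‖u - mulVecE D v‖ ^ 2 := by positivity
  unfold Fobj
  nlinarith [hL (mulVecE B v)]

lemma Fobj_sub_le_of_inProxL0 (hlam : 0 ≤ lam) (hγ : 0 < γ) (hα : 0 < α)
    {u u' : EuclideanSpace ℝ (Fin n)} {v : EuclideanSpace ℝ (Fin m)}
    (hp : InProxL0 (α * γ) u' ((1 - α) • u + α • mulVecE D v)) :
    Fobj ψ B D lam γ u' v - Fobj ψ B D lam γ u v ≤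
      -(lam / (2 * γ) * ((1 - α) / α)) * ‖u' - u‖ ^ 2 := by
  set w := mulVecE D v
  have hprox := hp u
  rw [show u' - ((1 - α) • u + α • w) = (u' - u) + α • (u - w) by module,
    show u - ((1 - α) • u + α • w) = α • (u - w) by module, norm_add_sq_real, norm_smul,
    inner_smul_right, Real.norm_of_nonneg hα.le] at hprox
  have hkey : ‖u' - u‖ ^ 2 + 2 * α * inner ℝ (u' - u) (u - w) + 2 * (α * γ) * (l0 u' - l0 u)
      ≤ 0 := by
    have hsimp : 1 / (2 * (α * γ)) * (‖u' - u‖ ^ 2 + 2 * α * inner ℝ (u' - u) (u - w)) +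
        (l0 u' - l0 u) ≤ 0 := by linarith
    have hscale := mul_le_mul_of_nonneg_left hsimp (by positivity : (0 : ℝ) ≤ 2 * (α * γ))
    rw [mul_zero, mul_add, ← mul_assoc, mul_one_div_cancel (by positivity), one_mul] at hscale
    exact hscale
  have hexp : Fobj ψ B D lam γ u' v - Fobj ψ B D lam γ u v +
      lam / (2 * γ) * ((1 - α) / α) * ‖u' - u‖ ^ 2 = lam / (2 * γ) / α *
      (‖u' - u‖ ^ 2 + 2 * α * inner ℝ (u' - u) (u - w) + 2 * (α * γ) * (l0 u' - l0 u)) := by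
    simp only [Fobj]
    rw [show u' - w = (u' - u) + (u - w) by abel, norm_add_sq_real]
    field_simp
    ring
  nlinarith [mul_nonpos_of_nonneg_of_nonpos (by positivity : 0 ≤ lam / (2 * γ) / α) hkey]

lemma tendsto_norm_succ_sub_of_descent (hbdd : BddBelow (Set.range ψ)) (hlam : 0 < lam)
    (hγ : 0 < γ) (hα : 0 < α) {ρ' : ℝ} (hρ' : ρ' < (lam / γ) * ((1 - α) / α))
    {u : ℕ → EuclideanSpace ℝ (Fin n)} {v : ℕ → EuclideanSpace ℝ (Fin m)}
    (hprox : ∀ᶠ k in atTop,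
      InProxL0 (α * γ) (u (k + 1)) ((1 - α) • u k + α • mulVecE D (v k)))
    (hineq : ∀ᶠ k in atTop,
      Fobj ψ B D lam γ (u (k + 1)) (v (k + 1)) - Fobj ψ B D lam γ (u (k + 1)) (v k) ≤
        (ρ' / 2) * ‖u (k + 1) - u k‖ ^ 2) :
    Tendsto (fun k => ‖u (k + 1) - u k‖) atTop (𝓝 0) := by
  obtain ⟨L, hL⟩ := hbdd
  have hhalf : lam / (2 * γ) * ((1 - α) / α) = lam / γ * ((1 - α) / α) / 2 := by ring
  refine tendsto_zero_of_add_mul_sq_le (a := fun k => Fobj ψ B D lam γ (u k) (v k))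
    (c := lam / (2 * γ) * ((1 - α) / α) - ρ' / 2) (by linarith) ⟨L, ?_⟩ ?_
  · rintro _ ⟨k, rfl⟩
    exact le_Fobj (fun y => hL ⟨y, rfl⟩) hlam.le hγ.le _ _
  · filter_upwards [hprox, hineq] with k hp hk
    linarith [Fobj_sub_le_of_inProxL0 (ψ := ψ) (B := B) hlam.le hγ hα hp]

/-- The operator `𝒯` of the statement. -/
def averagedOp (C : Set (Fin n)) (D : Matrix (Fin n) (Fin m) ℝ)
    (S : EuclideanSpace ℝ (Fin m) → EuclideanSpace ℝ (Fin m)) (α : ℝ)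
    (w : EuclideanSpace ℝ (Fin n)) : EuclideanSpace ℝ (Fin n) :=
  (1 - α) • Tmat C w + α • Tmat C (mulVecE D (S (mulVecE Dᵀ w)))

lemma lipschitzWith_averagedOp (hD : Dᵀ * D = 1) (hS : LipschitzWith 1 S) (hα₀ : 0 ≤ α)
    (hα₁ : α ≤ 1) (C : Set (Fin n)) : LipschitzWith 1 (averagedOp C D S α) := by
  refine LipschitzWith.of_dist_le_mul fun a b => ?_
  rw [NNReal.coe_one, one_mul, dist_eq_norm, dist_eq_norm]
  have hsplit : averagedOp C D S α a - averagedOp C D S α b = (1 - α) • Tmat C (a - b) +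
      α • Tmat C (mulVecE D (S (mulVecE Dᵀ a) - S (mulVecE Dᵀ b))) := by
    simp only [averagedOp, Tmat_sub, mulVecE_sub]
    module
  have hSD : ‖Tmat C (mulVecE D (S (mulVecE Dᵀ a) - S (mulVecE Dᵀ b)))‖ ≤ ‖a - b‖ :=
    calc _ ≤ ‖S (mulVecE Dᵀ a) - S (mulVecE Dᵀ b)‖ :=
          (norm_Tmat_le _ _).trans (norm_mulVecE_of_transpose_mul_self hD _).le
      _ ≤ ‖mulVecE Dᵀ (a - b)‖ := by simpa [mulVecE_sub] using hS.norm_sub_le _ _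
      _ ≤ ‖a - b‖ := norm_mulVecE_transpose_le hD _
  calc ‖averagedOp C D S α a - averagedOp C D S α b‖
      ≤ (1 - α) * ‖Tmat C (a - b)‖ +
          α * ‖Tmat C (mulVecE D (S (mulVecE Dᵀ a) - S (mulVecE Dᵀ b)))‖ := by
        rw [hsplit]
        refine (norm_add_le _ _).trans_eq ?_
        rw [norm_smul, norm_smul, Real.norm_of_nonneg (sub_nonneg.2 hα₁), Real.norm_of_nonneg hα₀]
    _ ≤ (1 - α) * ‖a - b‖ + α * ‖a - b‖ :=
        add_le_add (mul_le_mul_of_nonneg_left (norm_Tmat_le _ _) (sub_nonneg.2 hα₁))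
          (mul_le_mul_of_nonneg_left hSD hα₀)
    _ = ‖a - b‖ := by ring

lemma norm_sub_averagedOp_le (hD : Dᵀ * D = 1) (hα : 0 ≤ α) (hαγ : 0 < α * γ)
    {C : Set (Fin n)} {u u' : EuclideanSpace ℝ (Fin n)} {v : EuclideanSpace ℝ (Fin m)}
    (hp : InProxL0 (α * γ) u' ((1 - α) • u + α • mulVecE D v)) (hC : supp u' = C) :
    ‖u' - averagedOp C D S α u‖ ≤ α * ‖v - S (mulVecE Dᵀ u)‖ := by
  have hu' := hp.eq_Tmat_supp hαγ
  rw [hC, Tmat_add, Tmat_smul, Tmat_smul] at hu'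
  have hdiff : u' - averagedOp C D S α u = α • Tmat C (mulVecE D (v - S (mulVecE Dᵀ u))) := by
    rw [hu', averagedOp, mulVecE_sub, Tmat_sub]
    module
  rw [hdiff, norm_smul, Real.norm_of_nonneg hα, ← norm_mulVecE_of_transpose_mul_self hD]
  exact mul_le_mul_of_nonneg_left (norm_Tmat_le _ _) hα

lemma eq_Tmat_of_averagedOp_eq (hα : α ≠ 0) {C : Set (Fin n)} {w : EuclideanSpace ℝ (Fin n)}
    (hw : averagedOp C D S α w = w) (hC : supp w = C) :
    w = Tmat C (mulVecE D (S (mulVecE Dᵀ w))) := by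
  rw [averagedOp, Tmat_eq_self hC.le] at hw
  have : α • (Tmat C (mulVecE D (S (mulVecE Dᵀ w))) - w) = 0 := by
    linear_combination (norm := module) hw
  exact (sub_eq_zero.1 ((smul_eq_zero.1 this).resolve_left hα)).symm

lemma mul_norm_sub_le_norm_gradient_Hfun (hψ : ConvexOn ℝ Set.univ ψ) (hψd : Differentiable ℝ ψ)
    (hc : 0 < lam / (2 * γ))
    (hS : ∀ x v, ψ (mulVecE B (S x)) + (lam / (2 * γ)) * ‖S x - x‖ ^ 2 ≤
      ψ (mulVecE B v) + (lam / (2 * γ)) * ‖v - x‖ ^ 2)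
    (u : EuclideanSpace ℝ (Fin n)) (v : EuclideanSpace ℝ (Fin m)) :
    lam / (2 * γ) * ‖v - S (mulVecE Dᵀ u)‖ ≤
      ‖gradient (fun w => Hfun ψ B D lam γ w u) v‖ :=
  (convexOn_comp_mulVecE hψ B).mul_norm_sub_le_norm_gradient
    (differentiable_comp_mulVecE hψd B) hc (hS _) v

/-- The right-hand side is `F(·, w)` minimized over vectors supported in `C` (up to `λ‖·‖₀`). It is
convex in `w` and differs from `F(u*, w)`, which is minimized at `v* = S(Dᵀu*)`, by a term
vanishing to second order at `v*`. -/
lemma smooth_le_reduced_of_eq_Tmat (hψ : ConvexOn ℝ Set.univ ψ) (hD : Dᵀ * D = 1)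
    (hc : 0 ≤ lam / (2 * γ))
    (hS : ∀ x v, ψ (mulVecE B (S x)) + (lam / (2 * γ)) * ‖S x - x‖ ^ 2 ≤
      ψ (mulVecE B v) + (lam / (2 * γ)) * ‖v - x‖ ^ 2)
    {C : Set (Fin n)} {us : EuclideanSpace ℝ (Fin n)} (hsupp : supp us ⊆ C)
    (hus : us = Tmat C (mulVecE D (S (mulVecE Dᵀ us)))) (w : EuclideanSpace ℝ (Fin m)) :
    ψ (mulVecE B (S (mulVecE Dᵀ us))) + lam / (2 * γ) * ‖us - mulVecE D (S (mulVecE Dᵀ us))‖ ^ 2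
      ≤ ψ (mulVecE B w) + lam / (2 * γ) * ‖mulVecE D w - Tmat C (mulVecE D w)‖ ^ 2 := by
  set c := lam / (2 * γ)
  set vs := S (mulVecE Dᵀ us)
  set h := fun w => ψ (mulVecE B w) + c * ‖mulVecE D w - Tmat C (mulVecE D w)‖ ^ 2
  set g := fun w => ψ (mulVecE B w) + c * ‖mulVecE D w - us‖ ^ 2
  have hTus : Tmat C us = us := Tmat_eq_self hsupp
  have hgh (w) : g w = h w + c * ‖Tmat C (mulVecE D w) - us‖ ^ 2 := by
    simp only [g, h, norm_sub_sq_eq_of_Tmat_eq hTus (mulVecE D w)]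
    ring
  have hg (w) : g vs ≤ g w := by
    simp only [g, norm_mulVecE_sub_sq hD]
    nlinarith [hS (mulVecE Dᵀ us) w]
  have hh : ConvexOn ℝ Set.univ h := by
    let M : EuclideanSpace ℝ (Fin m) →ₗ[ℝ] EuclideanSpace ℝ (Fin n) :=
      { toFun := fun w => mulVecE D w - Tmat C (mulVecE D w)
        map_add' := fun x y => by simp only [mulVecE_add, Tmat_add]; abel
        map_smul' := fun a x => by simp only [mulVecE_smul, Tmat_smul, smul_sub]; rfl }
    have hq :=
      ((convexOn_univ_norm_sub_sq (0 : EuclideanSpace ℝ (Fin n))).smul hc).comp_linearMap M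
    exact (convexOn_comp_mulVecE hψ B).add (by simpa [M, Function.comp_def] using hq)
  have hmin := hh.le_of_isMin_of_le_add_sq hg (by simp only [g, h, ← hus]) (fun w =>
    ⟨c * ‖Tmat C (mulVecE D (w - vs))‖ ^ 2, fun t _ => le_of_eq <| by
      rw [hgh, mulVecE_add, mulVecE_smul, Tmat_add, Tmat_smul, ← hus, add_sub_cancel_left,
        norm_smul, mul_pow, Real.norm_eq_abs, sq_abs]
      ring⟩) w
  simpa only [h, ← hus, norm_sub_rev us] using hmin

lemma isLocalMin_Fobj (hψ : ConvexOn ℝ Set.univ ψ) (hψc : Continuous ψ) (hD : Dᵀ * D = 1)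
    (hlam : 0 < lam) (hγ : 0 < γ)
    (hS : ∀ x v, ψ (mulVecE B (S x)) + (lam / (2 * γ)) * ‖S x - x‖ ^ 2 ≤
      ψ (mulVecE B v) + (lam / (2 * γ)) * ‖v - x‖ ^ 2)
    {C : Set (Fin n)} {us : EuclideanSpace ℝ (Fin n)} (hsupp : supp us = C)
    (hus : us = Tmat C (mulVecE D (S (mulVecE Dᵀ us)))) :
    IsLocalMin (fun q : EuclideanSpace ℝ (Fin n) × EuclideanSpace ℝ (Fin m) =>
      Fobj ψ B D lam γ q.1 q.2) (us, S (mulVecE Dᵀ us)) := by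
  have hc : 0 ≤ lam / (2 * γ) := by positivity
  refine isLocalMin_add_mul_l0 (G := fun q => ψ (mulVecE B q.2) +
    lam / (2 * γ) * ‖q.1 - mulVecE D q.2‖ ^ 2) (by fun_prop) hlam fun q hq => ?_
  have hsplit := norm_sub_sq_eq_of_Tmat_eq (Tmat_eq_self (hsupp ▸ hq)) (mulVecE D q.2)
  have := smooth_le_reduced_of_eq_Tmat hψ hD hc hS hsupp.le hus q.2
  rw [norm_sub_rev q.1]
  nlinarith [sq_nonneg ‖Tmat C (mulVecE D q.2) - q.1‖]

end Problem

theorem stmt19_general (n m p : ℕ) (ψ : EuclideanSpace ℝ (Fin p) → ℝ)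
    (hconv : ConvexOn ℝ Set.univ ψ) (hdiff : ContDiff ℝ 1 ψ)
    (hbdd : BddBelow (Set.range ψ))
    (B : Matrix (Fin p) (Fin m) ℝ) (D : Matrix (Fin n) (Fin m) ℝ) (hD : Dᵀ * D = 1)
    (lam γ : ℝ) (hlam : 0 < lam) (hγ : 0 < γ)
    (S : EuclideanSpace ℝ (Fin m) → EuclideanSpace ℝ (Fin m))
    (hS : ∀ x v, ψ (mulVecE B (S x)) + (lam / (2 * γ)) * ‖S x - x‖ ^ 2 ≤
      ψ (mulVecE B v) + (lam / (2 * γ)) * ‖v - x‖ ^ 2)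
    (α : ℝ) (hα0 : 0 < α) (hα1 : α < 1)
    (ρ' : ℝ) (hρ'1 : ρ' < (lam / γ) * ((1 - α) / α))
    (e : ℕ → ℝ) (hsum : Summable fun k : ℕ => e (k + 2))
    (u : ℕ → EuclideanSpace ℝ (Fin n)) (v : ℕ → EuclideanSpace ℝ (Fin m))
    (hprox : ∀ k, 1 ≤ k →
      InProxL0 (α * γ) (u (k + 1)) ((1 - α) • u k + α • mulVecE D (v k)))
    (hineq : ∀ k, 1 ≤ k →
      Fobj ψ B D lam γ (u (k + 1)) (v (k + 1)) - Fobj ψ B D lam γ (u (k + 1)) (v k) ≤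
        (ρ' / 2) * ‖u (k + 1) - u k‖ ^ 2)
    (hgrad : ∀ k, 1 ≤ k →
      ‖gradient (fun w => Hfun ψ B D lam γ w (u (k + 1))) (v (k + 1))‖ ≤ e (k + 1))
    (hfix : ∀ C : Set (Fin n), (∃ N, ∀ k, N ≤ k → supp (u k) = C) →
      ∃ w : EuclideanSpace ℝ (Fin n),
        w = (1 - α) • Tmat C w + α • Tmat C (mulVecE D (S (mulVecE Dᵀ w)))) :
    ∃ (us : EuclideanSpace ℝ (Fin n)) (vs : EuclideanSpace ℝ (Fin m)),
      Tendsto u atTop (nhds us) ∧ Tendsto v atTop (nhds vs) ∧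
      IsLocalMin (fun q : EuclideanSpace ℝ (Fin n) × EuclideanSpace ℝ (Fin m) =>
        Fobj ψ B D lam γ q.1 q.2) (us, vs) := by
  have hc : 0 < lam / (2 * γ) := by positivity
  have hαγ : 0 < α * γ := by positivity
  have he : Summable e := (summable_nat_add_iff 2).1 hsum
  have hreg := tendsto_norm_succ_sub_of_descent hbdd hlam hγ hα0 hρ'1
    (eventually_atTop.2 ⟨1, hprox⟩) (eventually_atTop.2 ⟨1, hineq⟩)
  have hth : ∀ᶠ k in atTop, ∀ i, u k i ≠ 0 → √(2 * (α * γ)) ≤ |u k i| :=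
    eventually_atTop_of_succ fun k hk i => (hprox k hk).sqrt_le_abs hαγ
  obtain ⟨N, hN⟩ := exists_eventually_supp_eq (by positivity) hth hreg
  obtain ⟨w, hw⟩ := hfix _ ⟨N, hN⟩
  have hS1 := lipschitzWith_one_of_isMin_add_norm_sub_sq (convexOn_comp_mulVecE hconv B) hc hS
  have herr : ∀ᶠ k in atTop, ‖v k - S (mulVecE Dᵀ (u k))‖ ≤ e k / (lam / (2 * γ)) :=
    eventually_atTop_of_succ fun k hk => (le_div_iff₀' hc).2 <|
      (mul_norm_sub_le_norm_gradient_Hfun hconv (hdiff.differentiable one_ne_zero) hc hS _ _).trans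
        (hgrad k hk)
  have hstep : ∀ᶠ k in atTop, ‖u (k + 1) - averagedOp (supp (u N)) D S α (u k)‖ ≤
      α * (e k / (lam / (2 * γ))) := by
    filter_upwards [eventually_ge_atTop (N + 1), herr] with k hk hek
    exact (norm_sub_averagedOp_le hD hα0.le hαγ (hprox k (by omega)) (hN (k + 1) (by omega))).trans
      (mul_le_mul_of_nonneg_left hek hα0.le)
  obtain ⟨us, hus, hu⟩ := exists_tendsto_fixedPoint_of_eventually_inexact
    (lipschitzWith_averagedOp hD hS1 hα0.le hα1.le _) hw.symm ((he.div_const _).mul_left α) hstep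
    hreg
  have hsupp := supp_eq_of_tendsto hu (by positivity) hth (eventually_atTop.2 ⟨N, hN⟩)
  have hv : Tendsto v atTop (𝓝 (S (mulVecE Dᵀ us))) := by
    have hvS := squeeze_zero_norm' herr (by simpa using he.tendsto_atTop_zero.div_const _)
    simpa using hvS.add (((hS1.continuous.comp (continuous_mulVecE Dᵀ)).tendsto us).comp hu)
  exact ⟨us, _, hu, hv, isLocalMin_Fobj hconv hdiff.continuous hD hlam hγ hS hsupp
    (eq_Tmat_of_averagedOp_eq hα0.ne' hus hsupp)⟩

/-- **Theorem 1 of the paper.** The iterates `(ũ^k, ṽ^k)` produced by the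
inexact fixed-point proximity algorithm, with gradient error bounds
`‖∇H(ṽ^{k+1}; ũ^{k+1})‖₂ ≤ e^{k+1}` and `∑ e^{k+1} < ∞`, converge to a local minimizer
`(u*, v*)` of `F`. -/
theorem stmt19 (n m p : ℕ) (ψ : EuclideanSpace ℝ (Fin p) → ℝ)
    (hconv : ConvexOn ℝ Set.univ ψ) (hdiff : ContDiff ℝ 1 ψ)
    (hbdd : BddBelow (Set.range ψ))
    (B : Matrix (Fin p) (Fin m) ℝ) (D : Matrix (Fin n) (Fin m) ℝ) (hD : Dᵀ * D = 1)
    (lam γ : ℝ) (hlam : 0 < lam) (hγ : 0 < γ)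
    (S : EuclideanSpace ℝ (Fin m) → EuclideanSpace ℝ (Fin m))
    (hS : ∀ x v, ψ (mulVecE B (S x)) + (lam / (2 * γ)) * ‖S x - x‖ ^ 2 ≤
      ψ (mulVecE B v) + (lam / (2 * γ)) * ‖v - x‖ ^ 2)
    (hSuniq : ∀ x v, (∀ w, ψ (mulVecE B v) + (lam / (2 * γ)) * ‖v - x‖ ^ 2 ≤
      ψ (mulVecE B w) + (lam / (2 * γ)) * ‖w - x‖ ^ 2) → v = S x)
    (α : ℝ) (hα0 : 0 < α) (hα1 : α < 1)
    (ρ' : ℝ) (hρ'0 : 0 < ρ') (hρ'1 : ρ' < (lam / γ) * ((1 - α) / α))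
    (e : ℕ → ℝ) (he : ∀ k, 2 ≤ k → 0 < e k) (hsum : Summable fun k : ℕ => e (k + 2))
    (u : ℕ → EuclideanSpace ℝ (Fin n)) (v : ℕ → EuclideanSpace ℝ (Fin m))
    (hprox : ∀ k, 1 ≤ k →
      InProxL0 (α * γ) (u (k + 1)) ((1 - α) • u k + α • mulVecE D (v k)))
    (hineq : ∀ k, 1 ≤ k →
      Fobj ψ B D lam γ (u (k + 1)) (v (k + 1)) - Fobj ψ B D lam γ (u (k + 1)) (v k) ≤
        (ρ' / 2) * ‖u (k + 1) - u k‖ ^ 2)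
    (hgrad : ∀ k, 1 ≤ k →
      ‖gradient (fun w => Hfun ψ B D lam γ w (u (k + 1))) (v (k + 1))‖ ≤ e (k + 1))
    (hfix : ∀ C : Set (Fin n), (∃ N, ∀ k, N ≤ k → supp (u k) = C) →
      ∃ w : EuclideanSpace ℝ (Fin n),
        w = (1 - α) • Tmat C w + α • Tmat C (mulVecE D (S (mulVecE Dᵀ w)))) :
    ∃ (us : EuclideanSpace ℝ (Fin n)) (vs : EuclideanSpace ℝ (Fin m)),
      Tendsto u atTop (nhds us) ∧ Tendsto v atTop (nhds vs) ∧
      IsLocalMin (fun q : EuclideanSpace ℝ (Fin n) × EuclideanSpace ℝ (Fin m) =>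
        Fobj ψ B D lam γ q.1 q.2) (us, vs) :=
  stmt19_general n m p ψ hconv hdiff hbdd B D hD lam γ hlam hγ S hS α hα0 hα1 ρ' hρ'1 e hsum u v
    hprox hineq hgrad hfix
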